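/- The transfer map φ̃: O(P,A)_λ → C(P,A)_λ and its inverse ψ̃ are both continuous and piecewise affine. -/

import Mathlib

open Finset Set

section Marked

variable {P : Type*} [PartialOrder P]

/-- A marked poset: `A` contains all extremal (minimal or maximal) elements of `P`. -/
def IsMarkedPoset (A : Set P) : Prop := ∀ p : P, IsMin p ∨ IsMax p → p ∈ A

/-- The marked order polytope `O(P,A)_λ ⊆ ℝ^{P-A}`. -/
def markedOrderPolytope (A : Set P) (lam : P → ℝ) : Set ({p : P // p ∉ A} → ℝ) :=
  {x | (∀ p q : {p : P // p ∉ A}, (p : P) < (q : P) → x p ≤ x q) ∧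
       (∀ a ∈ A, ∀ p : {p : P // p ∉ A}, a < (p : P) → lam a ≤ x p) ∧
       (∀ a ∈ A, ∀ p : {p : P // p ∉ A}, (p : P) < a → x p ≤ lam a)}

/-- The marked chain polytope `C(P,A)_λ ⊆ ℝ^{P-A}`. -/
def markedChainPolytope (A : Set P) (lam : P → ℝ) : Set ({p : P // p ∉ A} → ℝ) :=
  {x | (∀ p, 0 ≤ x p) ∧
       ∀ a ∈ A, ∀ b ∈ A, ∀ (k : ℕ) (c : Fin (k + 1) → {p : P // p ∉ A}),
         StrictMono c → a < (c 0 : P) → (c (Fin.last k) : P) < b →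
         ∑ i, x (c i) ≤ lam b - lam a}

/-- The transfer map `φ̃`: `φ̃(x)_p` is the minimum of `x_p - x_q` over covers `q ⋖ p`,
where `x_q` is read as `λ_q` when `q ∈ A`. -/
noncomputable def transferMap (A : Set P) (lam : P → ℝ)
    (x : {p : P // p ∉ A} → ℝ) : {p : P // p ∉ A} → ℝ := fun p =>
  sInf ({v | ∃ q : {p : P // p ∉ A}, (q : P) ⋖ (p : P) ∧ v = x p - x q} ∪
        {v | ∃ a ∈ A, a ⋖ (p : P) ∧ v = x p - lam a})

open scoped Classical in
/-- The map `ψ`, defined recursively going up the poset: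
`ψ(y)_p = λ_p` for `p ∈ A`, and `ψ(y)_p = y_p + max {ψ(y)_q : p ≻ q}` for `p ∉ A`. -/
noncomputable def psiFull [Finite P] (A : Set P) (lam : P → ℝ)
    (y : {p : P // p ∉ A} → ℝ) : P → ℝ :=
  WellFounded.fix wellFounded_lt (fun p ih =>
    if h : p ∈ A then lam p
    else y ⟨p, h⟩ + sSup {v | ∃ q, ∃ hq : q ⋖ p, v = ih q hq.lt})

/-- `ψ̃(y)`: the restriction of `ψ(y)` to the coordinates in `P - A`. -/
noncomputable def psiTilde [Finite P] (A : Set P) (lam : P → ℝ)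
    (y : {p : P // p ∉ A} → ℝ) : {p : P // p ∉ A} → ℝ :=
  fun p => psiFull A lam y p

end Marked

/-!
Every coordinate of `φ̃` is a minimum, over the elements `q` covered by `p`, of the affine
functions `x ↦ x_p - x_q` (with `x_q = λ_q` for `q ∈ A`), and every coordinate of `ψ̃` is
built from constants by adding a coordinate to a maximum of coordinates already built. Minima and
maxima of finitely many continuous (resp. piecewise affine) functions are again continuous
(resp. piecewise affine): on each piece the extremum is attained by one of the finitely many
affine candidates. Minimal elements are marked, so every `p ∉ A` covers some `q` and none of
these extrema is taken over the empty set.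
-/

def IsPiecewiseAffine (k : Type*) {V W : Type*} [Ring k] [AddCommGroup V] [Module k V]
    [AddCommGroup W] [Module k W] (g : V → W) : Prop :=
  ∃ S : Set (V →ᵃ[k] W), S.Finite ∧ ∀ x, ∃ f ∈ S, g x = f x

section PiecewiseAffine

variable {k V W : Type*} [Ring k] [AddCommGroup V] [Module k V] [AddCommGroup W] [Module k W]

theorem AffineMap.isPiecewiseAffine (f : V →ᵃ[k] W) : IsPiecewiseAffine k f :=
  ⟨{f}, Set.finite_singleton f, fun _ => ⟨f, rfl, rfl⟩⟩

theorem isPiecewiseAffine_apply {ι : Type*} (i : ι) :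
    IsPiecewiseAffine k fun x : ι → W => x i :=
  (LinearMap.proj (R := k) (φ := fun _ => W) i).toAffineMap.isPiecewiseAffine

namespace IsPiecewiseAffine

variable {g h : V → W}

theorem add (hg : IsPiecewiseAffine k g) (hh : IsPiecewiseAffine k h) :
    IsPiecewiseAffine k fun x => g x + h x := by
  obtain ⟨S, hS, hgS⟩ := hg
  obtain ⟨T, hT, hhT⟩ := hh
  refine ⟨Set.image2 (· + ·) S T, hS.image2 _ hT, fun x => ?_⟩
  obtain ⟨f, hf, hfx⟩ := hgS x
  obtain ⟨f', hf', hf'x⟩ := hhT x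
  exact ⟨f + f', Set.mem_image2_of_mem hf hf',
    by simp only [hfx, hf'x, AffineMap.coe_add, Pi.add_apply]⟩

theorem sub (hg : IsPiecewiseAffine k g) (hh : IsPiecewiseAffine k h) :
    IsPiecewiseAffine k fun x => g x - h x := by
  obtain ⟨S, hS, hgS⟩ := hg
  obtain ⟨T, hT, hhT⟩ := hh
  refine ⟨Set.image2 (· - ·) S T, hS.image2 _ hT, fun x => ?_⟩
  obtain ⟨f, hf, hfx⟩ := hgS x
  obtain ⟨f', hf', hf'x⟩ := hhT x
  exact ⟨f - f', Set.mem_image2_of_mem hf hf',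
    by simp only [hfx, hf'x, AffineMap.coe_sub, Pi.sub_apply]⟩

theorem of_forall_exists_eq {ι : Type*} {s : Finset ι} {G : V → W} {g : ι → V → W}
    (hg : ∀ i ∈ s, IsPiecewiseAffine k (g i)) (hG : ∀ x, ∃ i ∈ s, G x = g i x) :
    IsPiecewiseAffine k G := by
  choose S hS hgS using hg
  refine ⟨⋃ i ∈ (s : Set ι), S i ‹_›, s.finite_toSet.biUnion' hS, fun x => ?_⟩
  obtain ⟨i, hi, hGx⟩ := hG x
  obtain ⟨f, hf, hfx⟩ := hgS i hi x
  exact ⟨f, Set.mem_iUnion₂.2 ⟨i, hi, hf⟩, hGx.trans hfx⟩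

theorem finset_sup' [LinearOrder W] {ι : Type*} {s : Finset ι} (hs : s.Nonempty)
    {g : ι → V → W} (hg : ∀ i ∈ s, IsPiecewiseAffine k (g i)) :
    IsPiecewiseAffine k fun x => s.sup' hs (g · x) :=
  of_forall_exists_eq hg fun x => s.exists_mem_eq_sup' hs (g · x)

theorem finset_inf' [LinearOrder W] {ι : Type*} {s : Finset ι} (hs : s.Nonempty)
    {g : ι → V → W} (hg : ∀ i ∈ s, IsPiecewiseAffine k (g i)) :
    IsPiecewiseAffine k fun x => s.inf' hs (g · x) :=
  of_forall_exists_eq hg fun x => s.exists_mem_eq_inf' hs (g · x)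

theorem pi {ι : Type*} [Finite ι] {g : V → ι → W}
    (hg : ∀ i, IsPiecewiseAffine k fun x => g x i) : IsPiecewiseAffine k g := by
  choose S hS hgS using hg
  refine ⟨AffineMap.pi '' Set.univ.pi S, (Set.Finite.pi hS).image _, fun x => ?_⟩
  choose f hf hfx using fun i => hgS i x
  exact ⟨AffineMap.pi f, Set.mem_image_of_mem _ fun i _ => hf i,
    funext fun i => by rw [AffineMap.pi_apply]; exact hfx i⟩

theorem exists_fin (hg : IsPiecewiseAffine k g) :
    ∃ (n : ℕ) (f : Fin n → V →ᵃ[k] W), ∀ x, ∃ i, g x = f i x := by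
  obtain ⟨S, hS, hgS⟩ := hg
  have := hS.to_subtype
  let e := Finite.equivFin S
  refine ⟨Nat.card S, fun i => e.symm i, fun x => ?_⟩
  obtain ⟨f, hf, hfx⟩ := hgS x
  exact ⟨e ⟨f, hf⟩, by simp only [Equiv.symm_apply_apply]; exact hfx⟩

end IsPiecewiseAffine

end PiecewiseAffine

section LowerCovers

variable {P : Type*} [PartialOrder P] [Fintype P]

open scoped Classical in
noncomputable def lowerCovers (p : P) : Finset P := Finset.univ.filter (· ⋖ p)

@[simp]
theorem mem_lowerCovers {p q : P} : q ∈ lowerCovers p ↔ q ⋖ p := by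
  simp [lowerCovers]

theorem lowerCovers_nonempty {p : P} (hp : ¬IsMin p) : (lowerCovers p).Nonempty := by
  obtain ⟨q, hq⟩ := exists_covBy_of_wellFoundedGT hp
  exact ⟨q, mem_lowerCovers.2 hq⟩

theorem lowerCovers_nonempty_of_isMarkedPoset {A : Set P} (hA : IsMarkedPoset A)
    (p : {p : P // p ∉ A}) : (lowerCovers (p : P)).Nonempty :=
  lowerCovers_nonempty fun h => p.2 (hA p (Or.inl h))

theorem sSup_covBy_eq_sup' {α : Type*} [ConditionallyCompleteLattice α] {p : P}
    (hp : (lowerCovers p).Nonempty) (g : P → α) :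
    sSup {v | ∃ q, ∃ _ : q ⋖ p, v = g q} = (lowerCovers p).sup' hp g := by
  rw [Finset.sup'_eq_csSup_image]
  congr 1
  ext v
  simp [eq_comm]

end LowerCovers

section MarkedCoord

variable {P : Type*}

open scoped Classical in
/-- The coordinate `x_q` of the point `x ∈ ℝ^{P-A}` extended to `P` by `x_a = λ_a` on `A`. -/
noncomputable def markedCoord (A : Set P) (lam : P → ℝ) (q : P) :
    ({p : P // p ∉ A} → ℝ) →ᵃ[ℝ] ℝ :=
  if h : q ∈ A then AffineMap.const ℝ _ (lam q) else (LinearMap.proj ⟨q, h⟩).toAffineMap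

theorem markedCoord_of_mem {A : Set P} (lam : P → ℝ) {q : P} (hq : q ∈ A)
    (x : {p : P // p ∉ A} → ℝ) : markedCoord A lam q x = lam q := by
  simp [markedCoord, hq]

theorem markedCoord_coe (A : Set P) (lam : P → ℝ) (q : {p : P // p ∉ A})
    (x : {p : P // p ∉ A} → ℝ) : markedCoord A lam q x = x q := by
  simp [markedCoord, q.2]

end MarkedCoord

section Transfer

variable {P : Type*} [PartialOrder P] [Fintype P]

theorem transferMap_apply {A : Set P} (lam : P → ℝ) (x : {p : P // p ∉ A} → ℝ)
    {p : {p : P // p ∉ A}} (hp : (lowerCovers (p : P)).Nonempty) :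
    transferMap A lam x p =
      (lowerCovers (p : P)).inf' hp fun q => x p - markedCoord A lam q x := by
  rw [transferMap, Finset.inf'_eq_csInf_image]
  congr 1
  ext v
  constructor
  · rintro (⟨q, hq, rfl⟩ | ⟨a, ha, hq, rfl⟩)
    · exact ⟨q, mem_lowerCovers.2 hq, by simp only [markedCoord_coe]⟩
    · exact ⟨a, mem_lowerCovers.2 hq, by simp only [markedCoord_of_mem lam ha]⟩
  · rintro ⟨q, hq, rfl⟩
    by_cases h : q ∈ A
    · exact Or.inr ⟨q, h, mem_lowerCovers.1 hq, by simp only [markedCoord_of_mem lam h]⟩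
    · exact Or.inl
        ⟨⟨q, h⟩, mem_lowerCovers.1 hq, by simp only [markedCoord_coe A lam ⟨q, h⟩]⟩

theorem transferMap_eq_inf' {A : Set P} (lam : P → ℝ) (hA : IsMarkedPoset A) :
    transferMap A lam = fun x (p : {p : P // p ∉ A}) => (lowerCovers (p : P)).inf'
      (lowerCovers_nonempty_of_isMarkedPoset hA p) fun q => x p - markedCoord A lam q x :=
  funext fun x => funext fun _ => transferMap_apply lam x _

theorem continuous_transferMap {A : Set P} (lam : P → ℝ) (hA : IsMarkedPoset A) :
    Continuous (transferMap A lam) := by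
  rw [transferMap_eq_inf' lam hA]
  exact continuous_pi fun p => Continuous.finset_inf'_apply _ fun q _ =>
    (continuous_apply p).sub <| AffineMap.continuous_linear_iff.1
      (markedCoord A lam q).linear.continuous_of_finiteDimensional

theorem isPiecewiseAffine_transferMap {A : Set P} (lam : P → ℝ) (hA : IsMarkedPoset A) :
    IsPiecewiseAffine ℝ (transferMap A lam) := by
  rw [transferMap_eq_inf' lam hA]
  exact IsPiecewiseAffine.pi fun p => IsPiecewiseAffine.finset_inf' _ fun q _ =>
    (isPiecewiseAffine_apply p).sub (markedCoord A lam q).isPiecewiseAffine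

end Transfer

section Psi

variable {P : Type*} [PartialOrder P] [Fintype P]

theorem psiFull_of_mem {A : Set P} (lam : P → ℝ) (y : {p : P // p ∉ A} → ℝ) {p : P}
    (hp : p ∈ A) : psiFull A lam y p = lam p := by
  rw [psiFull, WellFounded.fix_eq, dif_pos hp]

theorem psiFull_of_not_mem {A : Set P} (lam : P → ℝ) (y : {p : P // p ∉ A} → ℝ) {p : P}
    (hp : p ∉ A) (hne : (lowerCovers p).Nonempty) :
    psiFull A lam y p = y ⟨p, hp⟩ + (lowerCovers p).sup' hne (psiFull A lam y) := by
  rw [psiFull, WellFounded.fix_eq, dif_neg hp, ← sSup_covBy_eq_sup']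

theorem psiFull_induction {A : Set P} (lam : P → ℝ) (hA : IsMarkedPoset A)
    (Q : (({p : P // p ∉ A} → ℝ) → ℝ) → Prop) (const : ∀ c, Q fun _ => c)
    (add_sup' : ∀ (p : {p : P // p ∉ A}) (s : Finset P) (hs : s.Nonempty)
      (g : P → ({p : P // p ∉ A} → ℝ) → ℝ), (∀ q ∈ s, Q (g q)) →
      Q fun y => y p + s.sup' hs (g · y))
    (p : P) : Q fun y => psiFull A lam y p := by
  induction p using WellFoundedLT.induction with
  | _ p ih =>
    by_cases hp : p ∈ A
    · simpa only [psiFull_of_mem lam _ hp] using const (lam p)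
    · have hne := lowerCovers_nonempty_of_isMarkedPoset hA ⟨p, hp⟩
      simp only [psiFull_of_not_mem lam _ hp hne]
      exact add_sup' ⟨p, hp⟩ _ hne _ fun q hq => ih q (mem_lowerCovers.1 hq).lt

theorem continuous_psiTilde {A : Set P} (lam : P → ℝ) (hA : IsMarkedPoset A) :
    Continuous (psiTilde A lam) :=
  continuous_pi fun p => psiFull_induction lam hA Continuous (fun _ => continuous_const)
    (fun p _ hs _ hg => (continuous_apply p).add (Continuous.finset_sup'_apply hs hg)) p

theorem isPiecewiseAffine_psiTilde {A : Set P} (lam : P → ℝ) (hA : IsMarkedPoset A) :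
    IsPiecewiseAffine ℝ (psiTilde A lam) :=
  IsPiecewiseAffine.pi fun p => psiFull_induction lam hA (IsPiecewiseAffine ℝ)
    (fun c => (AffineMap.const ℝ _ c).isPiecewiseAffine)
    (fun p _ hs _ hg => (isPiecewiseAffine_apply p).add
      (IsPiecewiseAffine.finset_sup' hs hg)) p

end Psi

variable {P : Type*} [PartialOrder P]

/-- The transfer map `φ̃ : O(P,A)_λ → C(P,A)_λ` and its inverse `ψ̃` are continuous and
piecewise affine. -/
theorem transferMap_psiTilde_continuous_piecewise_affine [Fintype P]
    (A : Set P) (lam : P → ℝ) (hA : IsMarkedPoset A) :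
    ContinuousOn (transferMap A lam) (markedOrderPolytope A lam) ∧
    ContinuousOn (psiTilde A lam) (markedChainPolytope A lam) ∧
    (∃ (n : ℕ) (f : Fin n →
        (({p : P // p ∉ A} → ℝ) →ᵃ[ℝ] ({p : P // p ∉ A} → ℝ))),
      ∀ x ∈ markedOrderPolytope A lam, ∃ i, transferMap A lam x = f i x) ∧
    (∃ (n : ℕ) (f : Fin n →
        (({p : P // p ∉ A} → ℝ) →ᵃ[ℝ] ({p : P // p ∉ A} → ℝ))),
      ∀ y ∈ markedChainPolytope A lam, ∃ i, psiTilde A lam y = f i y) := by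
  obtain ⟨n, f, hf⟩ := (isPiecewiseAffine_transferMap lam hA).exists_fin
  obtain ⟨m, g, hg⟩ := (isPiecewiseAffine_psiTilde lam hA).exists_fin
  exact ⟨(continuous_transferMap lam hA).continuousOn, (continuous_psiTilde lam hA).continuousOn,
    ⟨n, f, fun x _ => hf x⟩, ⟨m, g, fun y _ => hg y⟩⟩
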